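/- Let Σ₁ = (A₁,B₁,C₁,D₁; X₁,U,Y) and Σ₂ = (A₂,B₂,C₂,D₂; X₂,U,Y) be minimal systems on complex Hilbert spaces realizing the same transfer function, i.e. D₁ = D₂ and C₁∘A₁ⁿ∘B₁ = C₂∘A₂ⁿ∘B₂ for all n ≥ 0. Then Σ₁ and Σ₂ are weakly similar: there exists an injective, closed, densely defined linear operator Z from X₁ to X₂ with dense range such that range(B₁) ⊆ dom(Z), Z(B₁u) = B₂u for all u ∈ U, A₁(dom Z) ⊆ dom Z, Z(A₁x) = A₂(Zx) for all x ∈ dom(Z), and C₁x = C₂(Zx) for all x ∈ dom(Z). -/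

import Mathlib

/-!
The graph of `Z` is the closure `G` of the span of the pairs `(A₁ⁿ B₁ u, A₂ⁿ B₂ u)`, i.e. the
controllable subspace of the parallel connection `(A₁ × A₂, (B₁, B₂))` of the two systems.
Equal moments give `C₁ A₁ᵏ x₁ = C₂ A₂ᵏ x₂` for every `(x₁, x₂) ∈ G`, first on the generators and
then by continuity. Hence observability of `Σ₂` makes `G` the graph of an operator, and
observability of `Σ₁` makes that operator injective. Controllability of the two systems gives a
dense domain and a dense range, and the intertwining relations hold because `G` is invariant
under `A₁ × A₂` and contains the pairs `(B₁ u, B₂ u)`.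
-/

noncomputable section

open ContinuousLinearMap

variable {X₁ X₂ U Y : Type*}
  [NormedAddCommGroup X₁] [InnerProductSpace ℂ X₁] [CompleteSpace X₁]
  [NormedAddCommGroup X₂] [InnerProductSpace ℂ X₂] [CompleteSpace X₂]
  [NormedAddCommGroup U] [InnerProductSpace ℂ U] [CompleteSpace U]
  [NormedAddCommGroup Y] [InnerProductSpace ℂ Y] [CompleteSpace Y]

/-- The controllable subspace `X^c` of the system. -/
def contSub {W : Type*} [NormedAddCommGroup W] [InnerProductSpace ℂ W] [CompleteSpace W]
    (A : W →L[ℂ] W) (B : U →L[ℂ] W) : Submodule ℂ W :=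
  (Submodule.span ℂ (⋃ n : ℕ, Set.range fun u : U => (A ^ n) (B u))).topologicalClosure

/-- The observable subspace `X^o` of the system. -/
def obsSub {W : Type*} [NormedAddCommGroup W] [InnerProductSpace ℂ W] [CompleteSpace W]
    (A : W →L[ℂ] W) (C : W →L[ℂ] Y) : Submodule ℂ W :=
  (Submodule.span ℂ (⋃ n : ℕ, Set.range fun y : Y =>
    ((ContinuousLinearMap.adjoint A) ^ n) ((ContinuousLinearMap.adjoint C) y))).topologicalClosure

section Graph

variable {R E F : Type*} [Ring R] [AddCommGroup E] [Module R E] [AddCommGroup F] [Module R F]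
  {g : Submodule R (E × F)}

lemma Submodule.exists_toLinearPMap_apply_eq (hg : ∀ p ∈ g, p.1 = 0 → p.2 = 0) {p : E × F}
    (hp : p ∈ g) :
    ∃ h : p.1 ∈ g.toLinearPMap.domain, g.toLinearPMap ⟨p.1, h⟩ = p.2 := by
  rw [← g.toLinearPMap_graph_eq hg] at hp
  exact ⟨LinearPMap.mem_domain_of_mem_graph hp, ((LinearPMap.image_iff _).2 hp).symm⟩

lemma Submodule.toLinearPMap_injective (hg : ∀ p ∈ g, p.1 = 0 → p.2 = 0)
    (hg' : ∀ p ∈ g, p.2 = 0 → p.1 = 0)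
    {x y : g.toLinearPMap.domain} (hxy : g.toLinearPMap x = g.toLinearPMap y) :
    (x : E) = y := by
  have hmem := g.sub_mem (g.mem_graph_toLinearPMap hg x) (g.mem_graph_toLinearPMap hg y)
  exact sub_eq_zero.1 (hg' _ hmem (sub_eq_zero.2 hxy))

end Graph

section Reachable

variable {R M N P : Type*} [Semiring R]
  [TopologicalSpace M] [AddCommMonoid M] [Module R M]
  [TopologicalSpace N] [AddCommMonoid N] [Module R N]
  [TopologicalSpace P] [AddCommMonoid P] [Module R P]

def reachable (A : M →L[R] M) (B : N →L[R] M) : Submodule R M :=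
  Submodule.span R (⋃ n : ℕ, Set.range fun u : N => (A ^ n) (B u))

variable {A : M →L[R] M} {B : N →L[R] M}

lemma pow_apply_mem_reachable (n : ℕ) (u : N) : (A ^ n) (B u) ∈ reachable A B :=
  Submodule.subset_span (Set.mem_iUnion_of_mem n ⟨u, rfl⟩)

lemma apply_mem_reachable (u : N) : B u ∈ reachable A B := by
  simpa using pow_apply_mem_reachable (A := A) 0 u

lemma reachable_le_iff {p : Submodule R M} :
    reachable A B ≤ p ↔ ∀ (n : ℕ) (u : N), (A ^ n) (B u) ∈ p := by
  simp only [reachable, Submodule.span_le, Set.iUnion_subset_iff, Set.range_subset_iff,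
    SetLike.mem_coe]

lemma reachable_mem_invtSubmodule : reachable A B ∈ Module.End.invtSubmodule (A : M →ₗ[R] M) := by
  rw [Module.End.mem_invtSubmodule, reachable_le_iff]
  intro n u
  rw [Submodule.mem_comap, coe_coe, ← mul_apply_eq_comp, ← pow_succ']
  exact pow_apply_mem_reachable (n + 1) u

lemma topologicalClosure_reachable_le_ker [ContinuousAdd M] [ContinuousConstSMul R M] [T1Space P]
    {C : M →L[R] P} (hCAB : ∀ n : ℕ, C.comp ((A ^ n).comp B) = 0) (k : ℕ) :
    (reachable A B).topologicalClosure ≤ (C.comp (A ^ k)).ker := by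
  refine Submodule.topologicalClosure_minimal _ (reachable_le_iff.2 fun n u => ?_) (isClosed_ker _)
  rw [LinearMap.mem_ker, coe_coe, comp_apply, ← mul_apply_eq_comp, ← pow_add]
  exact congr($(hCAB (k + n)) u)

end Reachable

section Parallel

variable {R M₁ M₂ N P : Type*} [Ring R]
  [TopologicalSpace M₁] [AddCommGroup M₁] [Module R M₁]
  [TopologicalSpace M₂] [AddCommGroup M₂] [Module R M₂]
  [TopologicalSpace N] [AddCommGroup N] [Module R N]
  [TopologicalSpace P] [AddCommGroup P] [Module R P]
  {A₁ : M₁ →L[R] M₁} {B₁ : N →L[R] M₁} {A₂ : M₂ →L[R] M₂} {B₂ : N →L[R] M₂}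

lemma ContinuousLinearMap.prodMap_pow (A₁ : M₁ →L[R] M₁) (A₂ : M₂ →L[R] M₂) (n : ℕ) :
    A₁.prodMap A₂ ^ n = (A₁ ^ n).prodMap (A₂ ^ n) := by
  induction n with
  | zero => ext <;> simp
  | succ n ih => ext <;> simp [pow_succ, ih, mul_apply_eq_comp]

lemma map_fst_reachable_prod :
    (reachable (A₁.prodMap A₂) (B₁.prod B₂)).map (LinearMap.fst R M₁ M₂) = reachable A₁ B₁ := by
  simp [reachable, Submodule.map_span, Set.image_iUnion, ← Set.range_comp, Function.comp_def,
    prodMap_pow]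

lemma map_snd_reachable_prod :
    (reachable (A₁.prodMap A₂) (B₁.prod B₂)).map (LinearMap.snd R M₁ M₂) = reachable A₂ B₂ := by
  simp [reachable, Submodule.map_span, Set.image_iUnion, ← Set.range_comp, Function.comp_def,
    prodMap_pow]

lemma moment_eq_of_mem_topologicalClosure_reachable_prod [ContinuousAdd M₁]
    [ContinuousConstSMul R M₁] [ContinuousAdd M₂] [ContinuousConstSMul R M₂]
    [IsTopologicalAddGroup P] [T1Space P] {C₁ : M₁ →L[R] P} {C₂ : M₂ →L[R] P}
    (hmom : ∀ n : ℕ, C₁.comp ((A₁ ^ n).comp B₁) = C₂.comp ((A₂ ^ n).comp B₂))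
    {p : M₁ × M₂} (hp : p ∈ (reachable (A₁.prodMap A₂) (B₁.prod B₂)).topologicalClosure)
    (k : ℕ) : C₁ ((A₁ ^ k) p.1) = C₂ ((A₂ ^ k) p.2) := by
  set C := C₁.comp (fst R M₁ M₂) - C₂.comp (snd R M₁ M₂)
  have hCAB : ∀ n : ℕ, C.comp ((A₁.prodMap A₂ ^ n).comp (B₁.prod B₂)) = 0 := fun n => by
    ext u
    simpa [C, prodMap_pow, sub_eq_zero] using congr($(hmom n) u)
  have := topologicalClosure_reachable_le_ker hCAB k hp
  rw [LinearMap.mem_ker, coe_coe, comp_apply, prodMap_pow, coe_prodMap', sub_apply] at this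
  exact sub_eq_zero.1 this

end Parallel

lemma dense_reachable_of_contSub_eq_top {V W : Type*} [NormedAddCommGroup V]
    [InnerProductSpace ℂ V] [NormedAddCommGroup W] [InnerProductSpace ℂ W] [CompleteSpace W]
    {A : W →L[ℂ] W} {B : V →L[ℂ] W} (h : contSub A B = ⊤) : Dense (reachable A B : Set W) :=
  Submodule.dense_iff_topologicalClosure_eq_top.2 h

lemma eq_zero_of_obsSub_eq_top {W : Type*} [NormedAddCommGroup W] [InnerProductSpace ℂ W]
    [CompleteSpace W] {A : W →L[ℂ] W} {C : W →L[ℂ] Y} (h : obsSub A C = ⊤) {x : W}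
    (hx : ∀ n : ℕ, C ((A ^ n) x) = 0) : x = 0 := by
  rw [obsSub, ← Submodule.dense_iff_topologicalClosure_eq_top] at h
  have : innerSL ℂ x = 0 := by
    refine ext_on h fun v hv => ?_
    obtain ⟨n, y, rfl⟩ := Set.mem_iUnion.1 hv
    rw [innerSL_apply_apply, zero_apply, ← star_eq_adjoint, ← star_pow, star_eq_adjoint,
      adjoint_inner_right, adjoint_inner_right, hx n, inner_zero_left]
  simpa using congr($this x)

theorem statement19_general
    (A₁ : X₁ →L[ℂ] X₁) (B₁ : U →L[ℂ] X₁) (C₁ : X₁ →L[ℂ] Y)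
    (A₂ : X₂ →L[ℂ] X₂) (B₂ : U →L[ℂ] X₂) (C₂ : X₂ →L[ℂ] Y)
    (hc₁ : contSub A₁ B₁ = ⊤) (ho₁ : obsSub A₁ C₁ = ⊤)
    (hc₂ : contSub A₂ B₂ = ⊤) (ho₂ : obsSub A₂ C₂ = ⊤)
    (hmom : ∀ n : ℕ, C₁.comp ((A₁ ^ n).comp B₁) = C₂.comp ((A₂ ^ n).comp B₂)) :
    ∃ Z : X₁ →ₗ.[ℂ] X₂,
      -- densely defined
      Dense (Z.domain : Set X₁)
      -- closed
      ∧ IsClosed (Z.graph : Set (X₁ × X₂))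
      -- injective
      ∧ (∀ x y : Z.domain, Z x = Z y → (x : X₁) = (y : X₁))
      -- dense range
      ∧ Dense (Set.range fun x : Z.domain => Z x)
      -- Z B₁ = B₂
      ∧ (∀ u : U, ∃ h : B₁ u ∈ Z.domain, Z ⟨B₁ u, h⟩ = B₂ u)
      -- Z A₁ = A₂ Z on dom Z
      ∧ (∀ x : Z.domain, ∃ h : A₁ (x : X₁) ∈ Z.domain, Z ⟨A₁ (x : X₁), h⟩ = A₂ (Z x))
      -- C₁ = C₂ Z on dom Z
      ∧ (∀ x : Z.domain, C₁ (x : X₁) = C₂ (Z x)) := by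
  set S := reachable (A₁.prodMap A₂) (B₁.prod B₂)
  set G := S.topologicalClosure
  have hmomG : ∀ p ∈ G, ∀ k : ℕ, C₁ ((A₁ ^ k) p.1) = C₂ ((A₂ ^ k) p.2) := fun p hp =>
    moment_eq_of_mem_topologicalClosure_reachable_prod hmom hp
  have hfst : ∀ p ∈ G, p.1 = 0 → p.2 = 0 := fun p hp h0 =>
    eq_zero_of_obsSub_eq_top ho₂ fun k => by rw [← hmomG p hp k, h0, map_zero, map_zero]
  have hsnd : ∀ p ∈ G, p.2 = 0 → p.1 = 0 := fun p hp h0 =>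
    eq_zero_of_obsSub_eq_top ho₁ fun k => by rw [hmomG p hp k, h0, map_zero, map_zero]
  have hinvt : ∀ p ∈ G, (A₁ p.1, A₂ p.2) ∈ G := fun p hp =>
    S.topologicalClosure_mem_invtSubmodule reachable_mem_invtSubmodule hp
  have hgraph : ∀ x : G.toLinearPMap.domain, ((x : X₁), G.toLinearPMap x) ∈ G :=
    G.mem_graph_toLinearPMap hfst
  refine ⟨G.toLinearPMap, ?_, ?_, fun x y => G.toLinearPMap_injective hfst hsnd, ?_,
    fun u => G.exists_toLinearPMap_apply_eq hfst (p := (B₁ u, B₂ u)) ?_,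
    fun x => G.exists_toLinearPMap_apply_eq hfst (hinvt _ (hgraph x)),
    fun x => hmomG _ (hgraph x) 0⟩
  · refine (dense_reachable_of_contSub_eq_top hc₁).mono ?_
    rw [← map_fst_reachable_prod (A₂ := A₂) (B₂ := B₂)]
    exact Submodule.map_mono S.le_topologicalClosure
  · rw [G.toLinearPMap_graph_eq hfst]
    exact S.isClosed_topologicalClosure
  · refine (dense_reachable_of_contSub_eq_top hc₂).mono ?_
    rw [← map_snd_reachable_prod (A₁ := A₁) (B₁ := B₁)]
    rintro _ ⟨p, hp, rfl⟩
    obtain ⟨h, hZ⟩ := G.exists_toLinearPMap_apply_eq hfst (S.le_topologicalClosure hp)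
    exact ⟨⟨p.1, h⟩, hZ⟩
  · exact S.le_topologicalClosure (apply_mem_reachable u)

theorem statement19
    (A₁ : X₁ →L[ℂ] X₁) (B₁ : U →L[ℂ] X₁) (C₁ : X₁ →L[ℂ] Y) (D₁ : U →L[ℂ] Y)
    (A₂ : X₂ →L[ℂ] X₂) (B₂ : U →L[ℂ] X₂) (C₂ : X₂ →L[ℂ] Y) (D₂ : U →L[ℂ] Y)
    (hc₁ : contSub A₁ B₁ = ⊤) (ho₁ : obsSub A₁ C₁ = ⊤)
    (hc₂ : contSub A₂ B₂ = ⊤) (ho₂ : obsSub A₂ C₂ = ⊤)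
    (hD : D₁ = D₂)
    (hmom : ∀ n : ℕ, C₁.comp ((A₁ ^ n).comp B₁) = C₂.comp ((A₂ ^ n).comp B₂)) :
    ∃ Z : X₁ →ₗ.[ℂ] X₂,
      -- densely defined
      Dense (Z.domain : Set X₁)
      -- closed
      ∧ IsClosed (Z.graph : Set (X₁ × X₂))
      -- injective
      ∧ (∀ x y : Z.domain, Z x = Z y → (x : X₁) = (y : X₁))
      -- dense range
      ∧ Dense (Set.range fun x : Z.domain => Z x)
      -- Z B₁ = B₂
      ∧ (∀ u : U, ∃ h : B₁ u ∈ Z.domain, Z ⟨B₁ u, h⟩ = B₂ u)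
      -- Z A₁ = A₂ Z on dom Z
      ∧ (∀ x : Z.domain, ∃ h : A₁ (x : X₁) ∈ Z.domain, Z ⟨A₁ (x : X₁), h⟩ = A₂ (Z x))
      -- C₁ = C₂ Z on dom Z
      ∧ (∀ x : Z.domain, C₁ (x : X₁) = C₂ (Z x)) :=
  statement19_general A₁ B₁ C₁ A₂ B₂ C₂ hc₁ ho₁ hc₂ ho₂ hmom

end
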